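/- arXiv:1512.04395 — 9 statements merged into one kernel-verified Lean document; each statement's English description precedes it below -/
import Mathlib

section
/- The local half-region depth vanishes at infinity: for any fixed nonnegative threshold τ with τ(j) > 0 for all j, sup_{‖x‖ ≥ M} ld_HR(x; X, τ) → 0 as M → ∞. -/
open MeasureTheory Filter Topology
open scoped ENNReal

variable {p : ℕ}

/-- Lower box `[x - τ, x]` (componentwise). -/
def lowerBox (x τ : Fin p → ℝ) : Set (Fin p → ℝ) :=
  {z | ∀ j, x j - τ j ≤ z j ∧ z j ≤ x j}

/-- Upper box `[x, x + τ]` (componentwise). -/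
def upperBox (x τ : Fin p → ℝ) : Set (Fin p → ℝ) :=
  {z | ∀ j, x j ≤ z j ∧ z j ≤ x j + τ j}

/-- Local half-region depth in `ℝ^p`. -/
noncomputable def ldHR (μ : Measure (Fin p → ℝ)) (x τ : Fin p → ℝ) : ℝ≥0∞ :=
  min (μ (lowerBox x τ)) (μ (upperBox x τ))

/-- Half-region depth in `ℝ^p`. -/
noncomputable def dHR (μ : Measure (Fin p → ℝ)) (x : Fin p → ℝ) : ℝ≥0∞ :=
  min (μ {z | ∀ j, z j ≤ x j}) (μ {z | ∀ j, x j ≤ z j})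

/-- The local half-region depth vanishes at infinity. -/
theorem ldHR_vanishing (μ : Measure (Fin p → ℝ)) [IsProbabilityMeasure μ]
    (τ : Fin p → ℝ) (hτ : ∀ j, 0 < τ j) :
    Tendsto (fun M : ℝ => ⨆ x ∈ {x : Fin p → ℝ | M ≤ ‖x‖}, ldHR μ x τ)
      atTop (𝓝 0) := by
  rw [ENNReal.tendsto_nhds_zero]
  intro ε hε
  set A : ℕ → Set (Fin p → ℝ) := fun n => {z | (n : ℝ) < ‖z‖} with hA
  have hmeas : ∀ n, MeasurableSet (A n) := fun n =>
    measurableSet_lt measurable_const measurable_norm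
  have hanti : Antitone A := by
    intro m n hmn z hz
    have hz' : (n : ℝ) < ‖z‖ := hz
    exact lt_of_le_of_lt (by exact_mod_cast hmn) hz'
  have hempty : ⋂ n, A n = (∅ : Set (Fin p → ℝ)) := by
    ext z
    simp only [Set.mem_iInter, Set.mem_empty_iff_false, iff_false, not_forall]
    obtain ⟨n, hn⟩ := exists_nat_ge ‖z‖
    exact ⟨n, by simp [hA, not_lt.mpr hn]⟩
  have htend : Tendsto (fun n => μ (A n)) atTop (𝓝 0) := by
    have h := tendsto_measure_iInter_atTop (fun n => (hmeas n).nullMeasurableSet) hanti ⟨0, measure_ne_top μ _⟩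
    rwa [hempty, measure_empty] at h
  obtain ⟨N, hN⟩ := ENNReal.tendsto_atTop_zero.mp htend ε hε
  filter_upwards [eventually_ge_atTop ((N : ℝ) + 1)] with M hM
  refine iSup₂_le fun x hx => ?_
  have hxN : (N : ℝ) < ‖x‖ := lt_of_lt_of_le (by linarith) (le_trans hM hx)
  have hj : ∃ j, (N : ℝ) < ‖x j‖ := by
    by_contra h
    push_neg at h
    exact absurd (pi_norm_le_iff_of_nonneg (by positivity) |>.mpr h) (not_le.mpr hxN)
  obtain ⟨j, hj⟩ := hj
  have hle : μ (A N) ≤ ε := hN N le_rfl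
  rcases lt_abs.mp hj with h1 | h1
  · -- x j > N : upper box escapes
    have hsub : upperBox x τ ⊆ A N := by
      intro z hz
      have : (N : ℝ) < z j := lt_of_lt_of_le h1 (hz j).1
      exact lt_of_lt_of_le (lt_of_lt_of_le this (le_abs_self _)) (norm_le_pi_norm z j)
    exact le_trans (min_le_right _ _) (le_trans (measure_mono hsub) hle)
  · -- x j < -N : lower box escapes
    have hsub : lowerBox x τ ⊆ A N := by
      intro z hz
      have hzj : z j < -(N : ℝ) := lt_of_le_of_lt (hz j).2 (by linarith)
      have : (N : ℝ) < ‖z j‖ := by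
        rw [Real.norm_eq_abs]
        exact lt_abs.mpr (Or.inr (by linarith))
      exact lt_of_lt_of_le this (norm_le_pi_norm z j)
    exact le_trans (min_le_left _ _) (le_trans (measure_mono hsub) hle)
end

section
/- The half-region depth in R^p vanishes at infinity: sup_{‖x‖ ≥ M} min(P(X ≤ x componentwise), P(X ≥ x componentwise)) → 0 as M → ∞. -/
open MeasureTheory Filter Topology
open scoped ENNReal

variable {p : ℕ}

/-
For the sup norm, some coordinate satisfies `|x j| = ‖x‖`; according to the sign of
`x j`, one of the two closed orthants at `x` lies in `{z | ‖x‖ ≤ ‖z‖}`. Hence the depth of every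
point with `M ≤ ‖x‖` is at most `μ {z | M ≤ ‖z‖}`, which tends to `0` by continuity from above.
-/

theorem tendsto_measure_norm_ge_atTop {E : Type*} [SeminormedAddCommGroup E] [MeasurableSpace E]
    [OpensMeasurableSpace E] (μ : Measure E) [IsFiniteMeasure μ] :
    Tendsto (fun M : ℝ => μ {z | M ≤ ‖z‖}) atTop (𝓝 0) := by
  have hempty : ⋂ M : ℝ, {z : E | M ≤ ‖z‖} = ∅ :=
    Set.eq_empty_of_forall_notMem fun z hz => absurd (Set.mem_iInter.1 hz (‖z‖ + 1)) (by simp)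
  have h := tendsto_measure_iInter_atTop (μ := μ) (s := fun M : ℝ => {z : E | M ≤ ‖z‖})
    (fun _ => (measurableSet_le measurable_const continuous_norm.measurable).nullMeasurableSet)
    (fun _ _ hab _ hz => hab.trans hz) ⟨0, measure_ne_top μ _⟩
  rwa [hempty, measure_empty] at h

theorem dHR_le_measure_norm_ge (μ : Measure (Fin p → ℝ)) (x : Fin p → ℝ) :
    dHR μ x ≤ μ {z | ‖x‖ ≤ ‖z‖} := by
  cases isEmpty_or_nonempty (Fin p)
  · simp [Subsingleton.elim x 0, dHR]
  obtain ⟨⟨j, hj⟩, -⟩ := IsGreatest.pi_norm x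
  simp only [Real.norm_eq_abs] at hj
  rcases le_total 0 (x j) with hxj | hxj
  · refine (min_le_right _ _).trans (measure_mono fun z hz => ?_)
    calc ‖x‖ = x j := by rw [← hj, abs_of_nonneg hxj]
      _ ≤ z j := hz j
      _ ≤ ‖z‖ := (le_abs_self _).trans (norm_le_pi_norm z j)
  · refine (min_le_left _ _).trans (measure_mono fun z hz => ?_)
    calc ‖x‖ = -x j := by rw [← hj, abs_of_nonpos hxj]
      _ ≤ -z j := neg_le_neg (hz j)
      _ ≤ ‖z‖ := (neg_le_abs _).trans (norm_le_pi_norm z j)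

/-- The half-region depth vanishes at infinity. -/
theorem dHR_vanishing (μ : Measure (Fin p → ℝ)) [IsProbabilityMeasure μ] :
    Tendsto (fun M : ℝ => ⨆ x ∈ {x : Fin p → ℝ | M ≤ ‖x‖}, dHR μ x)
      atTop (𝓝 0) :=
  tendsto_of_tendsto_of_tendsto_of_le_of_le tendsto_const_nhds (tendsto_measure_norm_ge_atTop μ)
    (fun _ => zero_le) fun _ => iSup₂_le fun x hx =>
      (dHR_le_measure_norm_ge μ x).trans (measure_mono fun _ hz => hx.out.trans hz)
end

section
/- The map x ↦ ld_HR(x; X, τ) is upper semicontinuous on R^p for any random vector X and any fixed nonnegative τ. -/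
open MeasureTheory Filter Topology
open scoped ENNReal

variable {p : ℕ}

open Metric Pointwise Set

/-- Translates of `K` by points `y` near `x` lie in small closed thickenings of `x +ᵥ K`, whose
measures decrease to that of `x +ᵥ K` when `K` is closed. -/
theorem upperSemicontinuous_measure_vadd_of_isClosed {G : Type*} [SeminormedAddCommGroup G]
    [MeasurableSpace G] [OpensMeasurableSpace G] (μ : Measure G) [IsFiniteMeasure μ]
    {K : Set G} (hK : IsClosed K) : UpperSemicontinuous fun x : G => μ (x +ᵥ K) := by
  intro x c hc
  have hlim := tendsto_measure_cthickening_of_isClosed (μ := μ)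
    ⟨1, one_pos, measure_ne_top μ _⟩ (hK.vadd x)
  obtain ⟨r, hr, hrc⟩ := Metric.eventually_nhds_iff.1 (hlim.eventually_lt_const hc)
  filter_upwards [ball_mem_nhds x (half_pos hr)] with y hy
  refine (measure_mono ?_).trans_lt (hrc (y := r / 2) ?_)
  · rintro _ ⟨k, hk, rfl⟩
    refine mem_cthickening_of_dist_le _ (x + k) _ _ ⟨k, hk, rfl⟩ ?_
    simpa [dist_add_right] using hy.le
  · simpa [abs_of_pos hr] using half_lt_self hr

theorem lowerBox_eq_vadd_Icc (x τ : Fin p → ℝ) : lowerBox x τ = x +ᵥ Icc (-τ) 0 := by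
  rw [← image_vadd]
  simp only [vadd_eq_add, image_const_add_Icc, add_zero, ← sub_eq_add_neg]
  ext z
  simp [lowerBox, Pi.le_def, forall_and]

theorem upperBox_eq_vadd_Icc (x τ : Fin p → ℝ) : upperBox x τ = x +ᵥ Icc 0 τ := by
  rw [← image_vadd]
  simp only [vadd_eq_add, image_const_add_Icc, add_zero]
  ext z
  simp [upperBox, Pi.le_def, forall_and]

theorem ldHR_upperSemicontinuous_general (μ : Measure (Fin p → ℝ)) [IsProbabilityMeasure μ]
    (τ : Fin p → ℝ) :
    UpperSemicontinuous (fun x : Fin p → ℝ => ldHR μ x τ) := by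
  simp only [ldHR, lowerBox_eq_vadd_Icc, upperBox_eq_vadd_Icc]
  exact (upperSemicontinuous_measure_vadd_of_isClosed μ isClosed_Icc).inf
    (upperSemicontinuous_measure_vadd_of_isClosed μ isClosed_Icc)

/-- The local half-region depth is upper semicontinuous in `x`. -/
theorem ldHR_upperSemicontinuous (μ : Measure (Fin p → ℝ)) [IsProbabilityMeasure μ]
    (τ : Fin p → ℝ) (hτ : ∀ j, 0 ≤ τ j) :
    UpperSemicontinuous (fun x : Fin p → ℝ => ldHR μ x τ) :=
  ldHR_upperSemicontinuous_general μ τ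
end

section
/- If the distribution of X is absolutely continuous (more generally, if every hyperplane of the form {z : z(j) = c} has probability zero), then x ↦ ld_HR(x; X, τ) is continuous on R^p. -/
open MeasureTheory Filter Topology
open scoped ENNReal

variable {p : ℕ}

lemma mem_Icc_pi (a b z : Fin p → ℝ) :
    z ∈ Set.Icc a b ↔ ∀ j, a j ≤ z j ∧ z j ≤ b j := by
  simp [Set.mem_Icc, Pi.le_def, forall_and]

/-- Along a countably generated filter, if the endpoints of boxes converge and all
axis-aligned hyperplanes are null, then the measures of the boxes converge. -/
lemma tendsto_measure_Icc_aux (μ : Measure (Fin p → ℝ)) [IsProbabilityMeasure μ]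
    (hnull : ∀ (j : Fin p) (c : ℝ), μ {z | z j = c} = 0)
    {α : Type*} {l : Filter α} [l.IsCountablyGenerated]
    (a b : α → Fin p → ℝ) (a₀ b₀ : Fin p → ℝ)
    (ha : Tendsto a l (𝓝 a₀)) (hb : Tendsto b l (𝓝 b₀)) :
    Tendsto (fun t => μ (Set.Icc (a t) (b t))) l (𝓝 (μ (Set.Icc a₀ b₀))) := by
  have haj : ∀ j : Fin p, Tendsto (fun t => a t j) l (𝓝 (a₀ j)) :=
    fun j => ((continuous_apply j).tendsto a₀).comp ha
  have hbj : ∀ j : Fin p, Tendsto (fun t => b t j) l (𝓝 (b₀ j)) :=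
    fun j => ((continuous_apply j).tendsto b₀).comp hb
  have hrw : ∀ (u v : Fin p → ℝ),
      μ (Set.Icc u v) = ∫⁻ z, (Set.Icc u v).indicator 1 z ∂μ := by
    intro u v; rw [lintegral_indicator_one measurableSet_Icc]
  simp only [hrw]
  apply tendsto_lintegral_filter_of_dominated_convergence (fun _ => (1 : ℝ≥0∞))
  · exact Eventually.of_forall fun t => measurable_one.indicator measurableSet_Icc
  · refine Eventually.of_forall fun t => ae_of_all _ fun z => ?_
    by_cases hz : z ∈ Set.Icc (a t) (b t) <;> simp [hz]
  · simp
  · -- a.e. pointwise convergence of indicators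
    have hae : ∀ᵐ z ∂μ, ∀ j : Fin p, z j ≠ a₀ j ∧ z j ≠ b₀ j := by
      rw [ae_all_iff]
      intro j
      have : μ ({z : Fin p → ℝ | z j = a₀ j} ∪ {z | z j = b₀ j}) = 0 :=
        measure_union_null (hnull j (a₀ j)) (hnull j (b₀ j))
      refine measure_mono_null (fun z hz => ?_) this
      simp only [Set.mem_setOf_eq, Set.mem_union]
      by_contra h
      push_neg at h
      exact hz ⟨h.1, h.2⟩
    filter_upwards [hae] with z hz
    by_cases hmem : z ∈ Set.Icc a₀ b₀
    · -- z is in the interior coordinates: strict inequalities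
      have hstrict : ∀ j : Fin p, a₀ j < z j ∧ z j < b₀ j := by
        intro j
        have h := (mem_Icc_pi a₀ b₀ z).1 hmem j
        exact ⟨lt_of_le_of_ne h.1 (Ne.symm (hz j).1), lt_of_le_of_ne h.2 (hz j).2⟩
      have hev : ∀ᶠ t in l, z ∈ Set.Icc (a t) (b t) := by
        have : ∀ᶠ t in l, ∀ j : Fin p, a t j ≤ z j ∧ z j ≤ b t j := by
          rw [eventually_all]
          intro j
          filter_upwards [(haj j).eventually_lt_const (hstrict j).1,
            (hbj j).eventually_const_lt (hstrict j).2] with t h1 h2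
          exact ⟨h1.le, h2.le⟩
        filter_upwards [this] with t ht
        exact (mem_Icc_pi _ _ z).2 ht
      have heq : (fun t => (Set.Icc (a t) (b t)).indicator (1 : (Fin p → ℝ) → ℝ≥0∞) z)
          =ᶠ[l] fun _ => 1 := by
        filter_upwards [hev] with t ht
        simp [Set.indicator_of_mem ht]
      rw [Set.indicator_of_mem hmem]
      exact Tendsto.congr' heq.symm tendsto_const_nhds
    · -- eventually outside
      have : ∃ j : Fin p, z j < a₀ j ∨ b₀ j < z j := by
        by_contra h
        push_neg at h
        exact hmem ((mem_Icc_pi a₀ b₀ z).2 fun j => ⟨(h j).1, (h j).2⟩)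
      obtain ⟨j, hj⟩ := this
      have hev : ∀ᶠ t in l, z ∉ Set.Icc (a t) (b t) := by
        rcases hj with hj | hj
        · filter_upwards [(haj j).eventually_const_lt hj] with t ht hc
          exact absurd ((mem_Icc_pi _ _ z).1 hc j).1 (not_le.2 ht)
        · filter_upwards [(hbj j).eventually_lt_const hj] with t ht hc
          exact absurd ((mem_Icc_pi _ _ z).1 hc j).2 (not_le.2 ht)
      have heq : (fun t => (Set.Icc (a t) (b t)).indicator (1 : (Fin p → ℝ) → ℝ≥0∞) z)
          =ᶠ[l] fun _ => 0 := by
        filter_upwards [hev] with t ht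
        simp [Set.indicator_of_notMem ht]
      rw [Set.indicator_of_notMem hmem]
      exact Tendsto.congr' heq.symm tendsto_const_nhds

lemma lowerBox_eq_Icc (x τ : Fin p → ℝ) : lowerBox x τ = Set.Icc (x - τ) x := by
  ext z; simp only [lowerBox, Set.mem_setOf_eq, mem_Icc_pi, Pi.sub_apply]

lemma upperBox_eq_Icc (x τ : Fin p → ℝ) : upperBox x τ = Set.Icc x (x + τ) := by
  ext z; simp only [upperBox, Set.mem_setOf_eq, mem_Icc_pi, Pi.add_apply]

/-- If every axis-aligned hyperplane is null, the local half-region depth is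
continuous in `x`. -/
theorem ldHR_continuous (μ : Measure (Fin p → ℝ)) [IsProbabilityMeasure μ]
    (τ : Fin p → ℝ) (hτ : ∀ j, 0 ≤ τ j)
    (hnull : ∀ (j : Fin p) (c : ℝ), μ {z | z j = c} = 0) :
    Continuous (fun x : Fin p → ℝ => ldHR μ x τ) := by
  have hlow : Continuous (fun x : Fin p → ℝ => μ (lowerBox x τ)) := by
    simp only [lowerBox_eq_Icc]
    rw [continuous_iff_continuousAt]
    intro x₀
    exact tendsto_measure_Icc_aux μ hnull (fun x => x - τ) (fun x => x) (x₀ - τ) x₀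
      ((continuous_id.sub continuous_const).tendsto x₀) (continuous_id.tendsto x₀)
  have hupp : Continuous (fun x : Fin p → ℝ => μ (upperBox x τ)) := by
    simp only [upperBox_eq_Icc]
    rw [continuous_iff_continuousAt]
    intro x₀
    exact tendsto_measure_Icc_aux μ hnull (fun x => x) (fun x => x + τ) x₀ (x₀ + τ)
      (continuous_id.tendsto x₀) ((continuous_id.add continuous_const).tendsto x₀)
  exact hlow.min hupp
end

section
/- The empirical local half-region depth is uniformly strongly consistent: sup_{x ∈ R^p} | ld_HR(x; X_n, τ) − ld_HR(x; X, τ) | → 0 almost surely as n → ∞. -/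
open MeasureTheory Filter Topology
open scoped ENNReal

variable {p : ℕ}

/-- Empirical local half-region depth based on the first `n` observations. -/
noncomputable def ldHRemp {Ω : Type*} (X : ℕ → Ω → (Fin p → ℝ)) (n : ℕ) (ω : Ω)
    (x τ : Fin p → ℝ) : ℝ :=
  min ((n : ℝ)⁻¹ * ∑ i ∈ Finset.range n,
        Set.indicator (lowerBox x τ) (fun _ => (1 : ℝ)) (X i ω))
      ((n : ℝ)⁻¹ * ∑ i ∈ Finset.range n,
        Set.indicator (upperBox x τ) (fun _ => (1 : ℝ)) (X i ω))

/-- Real-valued local half-region depth. -/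
noncomputable def ldHRreal (μ : Measure (Fin p → ℝ)) (x τ : Fin p → ℝ) : ℝ :=
  min (μ (lowerBox x τ)).toReal (μ (upperBox x τ)).toReal

/-!
Both boxes entering the depth are coordinate boxes `∏ⱼ [aⱼ, bⱼ]`, so it suffices to prove a
Glivenko–Cantelli theorem for the class of all such boxes. For every `ε > 0` this class has
finitely many measurable brackets `I ⊆ B ⊆ O` with `μ (O \ I) ≤ ε`: on the line, rays are
bracketed by a compactness argument, and brackets of a product are products of brackets. The strong
law of large numbers on the finitely many brackets, together with monotonicity of the empirical
frequency, squeezes the empirical measure of every box at once; finally `min` is 1-Lipschitz.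
-/

open Set

section Brackets

variable {α ι κ : Type*} [MeasurableSpace α]

/-- All `ε`-bracketing numbers of the family of sets `A` in `L¹(μ)` are finite. -/
def HasFiniteBrackets (μ : Measure α) (A : ι → Set α) : Prop :=
  ∀ ε > 0, ∃ 𝒞 : Finset (Set α), (∀ C ∈ 𝒞, MeasurableSet C) ∧
    ∀ i, ∃ I ∈ 𝒞, ∃ O ∈ 𝒞, I ⊆ A i ∧ A i ⊆ O ∧ μ (O \ I) ≤ ε

namespace HasFiniteBrackets

variable {μ : Measure α} {A : ι → Set α}

theorem comp (hA : HasFiniteBrackets μ A) (g : κ → ι) : HasFiniteBrackets μ (A ∘ g) :=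
  fun ε hε => (hA ε hε).imp fun _ h𝒞 => ⟨h𝒞.1, fun k => h𝒞.2 (g k)⟩

theorem preimage {β : Type*} [MeasurableSpace β] {f : α → β} {A : ι → Set β}
    (hA : HasFiniteBrackets (μ.map f) A) (hf : Measurable f) :
    HasFiniteBrackets μ fun i => f ⁻¹' A i := by
  classical
  intro ε hε
  obtain ⟨𝒞, h𝒞meas, h𝒞⟩ := hA ε hε
  refine ⟨𝒞.image (f ⁻¹' ·), by simpa using fun C hC => hf (h𝒞meas C hC), fun i => ?_⟩
  obtain ⟨I, hI, O, hO, hIA, hAO, hgap⟩ := h𝒞 i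
  exact ⟨f ⁻¹' I, Finset.mem_image_of_mem _ hI, f ⁻¹' O, Finset.mem_image_of_mem _ hO,
    preimage_mono hIA, preimage_mono hAO, (Measure.le_map_apply hf.aemeasurable _).trans hgap⟩

theorem inter {B : κ → Set α} (hA : HasFiniteBrackets μ A) (hB : HasFiniteBrackets μ B) :
    HasFiniteBrackets μ fun ik : ι × κ => A ik.1 ∩ B ik.2 := by
  classical
  intro ε hε
  obtain ⟨𝒞, h𝒞meas, h𝒞⟩ := hA (ε / 2) (ENNReal.half_pos hε.ne')
  obtain ⟨𝒟, h𝒟meas, h𝒟⟩ := hB (ε / 2) (ENNReal.half_pos hε.ne')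
  refine ⟨Finset.image₂ (· ∩ ·) 𝒞 𝒟, ?_, fun ik => ?_⟩
  · simp only [Finset.mem_image₂]
    rintro _ ⟨C, hC, D, hD, rfl⟩
    exact (h𝒞meas C hC).inter (h𝒟meas D hD)
  obtain ⟨I, hI, O, hO, hIA, hAO, hgapA⟩ := h𝒞 ik.1
  obtain ⟨J, hJ, P, hP, hJB, hBP, hgapB⟩ := h𝒟 ik.2
  refine ⟨I ∩ J, Finset.mem_image₂_of_mem hI hJ, O ∩ P, Finset.mem_image₂_of_mem hO hP,
    inter_subset_inter hIA hJB, inter_subset_inter hAO hBP, ?_⟩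
  calc μ ((O ∩ P) \ (I ∩ J)) ≤ μ ((O \ I) ∪ (P \ J)) := by
        refine measure_mono fun z ⟨⟨hzO, hzP⟩, hz⟩ => ?_
        by_cases hzI : z ∈ I
        · exact Or.inr ⟨hzP, fun hzJ => hz ⟨hzI, hzJ⟩⟩
        · exact Or.inl ⟨hzO, hzI⟩
    _ ≤ μ (O \ I) + μ (P \ J) := measure_union_le _ _
    _ ≤ ε := by simpa only [ENNReal.add_halves] using add_le_add hgapA hgapB

theorem iInter [Fintype ι] {β : ι → Type*} {A : ∀ j, β j → Set α}
    (hA : ∀ j, HasFiniteBrackets μ (A j)) :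
    HasFiniteBrackets μ fun i : (∀ j, β j) => ⋂ j, A j (i j) := by
  classical
  intro ε hε
  have hη : 0 < ε / Fintype.card ι := ENNReal.div_pos hε.ne' (ENNReal.natCast_ne_top _)
  choose 𝒞 h𝒞meas h𝒞 using fun j => hA j _ hη
  refine ⟨(Fintype.piFinset 𝒞).image fun C => ⋂ j, C j, ?_, fun i => ?_⟩
  · simp only [Finset.mem_image, Fintype.mem_piFinset]
    rintro _ ⟨C, hC, rfl⟩
    exact MeasurableSet.iInter fun j => h𝒞meas j _ (hC j)
  choose I hI O hO hIA hAO hgap using fun j => h𝒞 j (i j)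
  refine ⟨⋂ j, I j, Finset.mem_image_of_mem _ (Fintype.mem_piFinset.2 hI),
    ⋂ j, O j, Finset.mem_image_of_mem _ (Fintype.mem_piFinset.2 hO),
    iInter_mono hIA, iInter_mono hAO, ?_⟩
  calc μ ((⋂ j, O j) \ ⋂ j, I j) ≤ μ (⋃ j, O j \ I j) := by
        rw [sdiff_iInter]
        exact measure_mono (iUnion_mono fun j => sdiff_subset_sdiff_left (iInter_subset _ j))
    _ ≤ ∑ j, μ (O j \ I j) := measure_iUnion_fintype_le _ _
    _ ≤ ∑ _j : ι, ε / Fintype.card ι := Finset.sum_le_sum fun j _ => hgap j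
    _ ≤ ε := by
        rw [Finset.sum_const, Finset.card_univ, nsmul_eq_mul]
        exact ENNReal.mul_div_le

end HasFiniteBrackets

end Brackets

section RealLine

theorem exists_pos_measure_Ioo_sdiff_singleton_le (ν : Measure ℝ) [IsFiniteMeasure ν] (x : ℝ)
    {ε : ℝ≥0∞} (hε : 0 < ε) : ∃ δ > 0, ν (Ioo (x - δ) (x + δ) \ {x}) ≤ ε := by
  have hempty : ⋂ δ > (0 : ℝ), Ioo (x - δ) (x + δ) \ {x} = ∅ := by
    refine eq_empty_of_forall_notMem fun z hz => ?_
    simp only [mem_iInter] at hz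
    have hpos : 0 < |z - x| := abs_pos.2 (sub_ne_zero.2 (hz 1 one_pos).2)
    obtain ⟨⟨h₁, h₂⟩, -⟩ := hz _ hpos
    cases abs_cases (z - x) <;> linarith
  have hlim := tendsto_measure_biInter_gt (μ := ν) (a := (0 : ℝ))
    (s := fun δ => Ioo (x - δ) (x + δ) \ {x})
    (fun _ _ => (measurableSet_Ioo.diff (measurableSet_singleton x)).nullMeasurableSet)
    (fun _ _ _ hδ => sdiff_subset_sdiff_left (Ioo_subset_Ioo (by linarith) (by linarith)))
    ⟨1, one_pos, measure_ne_top _ _⟩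
  rw [hempty, measure_empty] at hlim
  obtain ⟨δ, hδ, hδpos⟩ := ((hlim.eventually (ge_mem_nhds hε)).and self_mem_nhdsWithin).exists
  exact ⟨δ, hδpos, hδ⟩

/-- Tightness leaves mass at most `ε` outside `[m, M]`, and a finite cover of `[m, M]` by punctured
intervals `(s - δ s, s + δ s) \ {s}` of mass at most `ε` supplies the bracket endpoints `s`,
`s ± δ s`. -/
theorem hasFiniteBrackets_Iic (ν : Measure ℝ) [IsFiniteMeasure ν] : HasFiniteBrackets ν Iic := by
  classical
  intro ε hε
  obtain ⟨K, hK, hKc⟩ := isTightMeasureSet_iff_exists_isCompact_measure_compl_le.1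
    (isTightMeasureSet_singleton (μ := ν)) ε hε
  replace hKc : ν Kᶜ ≤ ε := hKc ν rfl
  obtain ⟨m, hm⟩ := hK.bddBelow
  obtain ⟨M, hM⟩ := hK.bddAbove
  have hcompl : ∀ z, z < m ∨ M < z → z ∈ Kᶜ := fun z hz hzK =>
    hz.elim (hm hzK).not_gt (hM hzK).not_gt
  choose δ hδ hgap using fun s => exists_pos_measure_Ioo_sdiff_singleton_le ν s hε
  obtain ⟨T, -, hT⟩ := isCompact_Icc.elim_nhds_subcover (fun s => Ioo (s - δ s) (s + δ s))
    fun s _ => Ioo_mem_nhds (by linarith [hδ s]) (by linarith [hδ s])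
  set G : Finset ℝ := {m, M} ∪ T ∪ T.image (fun s => s - δ s) ∪ T.image (fun s => s + δ s)
  have hG : ∀ s ∈ T, s ∈ G ∧ s - δ s ∈ G ∧ s + δ s ∈ G := fun s hs => by
    simp only [G, Finset.mem_union, Finset.mem_image]
    exact ⟨.inl (.inl (.inr hs)), .inl (.inr ⟨s, hs, rfl⟩), .inr ⟨s, hs, rfl⟩⟩
  set 𝒞 : Finset (Set ℝ) := {∅, univ} ∪ G.image Iic ∪ G.image Iio
  have hIic : ∀ g ∈ G, Iic g ∈ 𝒞 := fun g hg =>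
    Finset.mem_union_left _ (Finset.mem_union_right _ (Finset.mem_image_of_mem _ hg))
  have hIio : ∀ g ∈ G, Iio g ∈ 𝒞 := fun g hg =>
    Finset.mem_union_right _ (Finset.mem_image_of_mem _ hg)
  refine ⟨𝒞, ?_, fun b => ?_⟩
  · simp only [𝒞, Finset.mem_union, Finset.mem_insert, Finset.mem_singleton, Finset.mem_image]
    rintro _ (((rfl | rfl) | ⟨g, -, rfl⟩) | ⟨g, -, rfl⟩)
    exacts [.empty, .univ, measurableSet_Iic, measurableSet_Iio]
  rcases lt_or_ge b m with hbm | hmb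
  · refine ⟨∅, by simp [𝒞], Iio m, hIio m (by simp [G]), empty_subset _,
      Iic_subset_Iio.2 hbm, ?_⟩
    exact (measure_mono fun z hz => hcompl z (.inl hz.1)).trans hKc
  rcases lt_or_ge M b with hMb | hbM
  · refine ⟨Iic M, hIic M (by simp [G]), univ, by simp [𝒞], Iic_subset_Iic.2 hMb.le,
      subset_univ _, ?_⟩
    exact (measure_mono fun z hz => hcompl z (.inr (not_le.1 hz.2))).trans hKc
  obtain ⟨s, hsT, hbs⟩ := mem_iUnion₂.1 (hT ⟨hmb, hbM⟩)
  obtain ⟨hsG, hsG_left, hsG_right⟩ := hG s hsT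
  rcases lt_trichotomy b s with hlt | rfl | hgt
  · refine ⟨Iic (s - δ s), hIic _ hsG_left, Iio s, hIio _ hsG, Iic_subset_Iic.2 hbs.1.le,
      Iic_subset_Iio.2 hlt, (measure_mono ?_).trans (hgap s)⟩
    rintro z ⟨hzs, hz⟩
    exact ⟨⟨not_le.1 hz, by linarith [hδ s, mem_Iio.1 hzs]⟩, (mem_Iio.1 hzs).ne⟩
  · exact ⟨Iic b, hIic _ hsG, Iic b, hIic _ hsG, subset_rfl, subset_rfl, by simp⟩
  · refine ⟨Iic s, hIic _ hsG, Iio (s + δ s), hIio _ hsG_right, Iic_subset_Iic.2 hgt.le,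
      Iic_subset_Iio.2 hbs.2, (measure_mono ?_).trans (hgap s)⟩
    rintro z ⟨hzs, hz⟩
    have hsz : s < z := not_le.1 hz
    exact ⟨⟨by linarith [hδ s], hzs⟩, hsz.ne'⟩

theorem hasFiniteBrackets_Ici (ν : Measure ℝ) [IsFiniteMeasure ν] : HasFiniteBrackets ν Ici := by
  simpa [Function.comp_def] using
    ((hasFiniteBrackets_Iic (ν.map Neg.neg)).preimage measurable_neg).comp Neg.neg

theorem hasFiniteBrackets_Icc (ν : Measure ℝ) [IsFiniteMeasure ν] :
    HasFiniteBrackets ν fun ab : ℝ × ℝ => Icc ab.1 ab.2 := by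
  simpa only [Ici_inter_Iic] using (hasFiniteBrackets_Ici ν).inter (hasFiniteBrackets_Iic ν)

theorem hasFiniteBrackets_pi_Icc {ι : Type*} [Fintype ι] (μ : Measure (ι → ℝ))
    [IsFiniteMeasure μ] :
    HasFiniteBrackets μ fun ab : ι → ℝ × ℝ => univ.pi fun j => Icc (ab j).1 (ab j).2 := by
  simpa only [univ_pi_eq_iInter] using
    HasFiniteBrackets.iInter fun j => (hasFiniteBrackets_Icc (μ.map (Function.eval j))).preimage
      (measurable_pi_apply j)

end RealLine

section Empirical

open ProbabilityTheory

variable {Ω α : Type*}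

noncomputable def empiricalFreq (X : ℕ → Ω → α) (n : ℕ) (ω : Ω) (S : Set α) : ℝ :=
  (n : ℝ)⁻¹ * ∑ i ∈ Finset.range n, S.indicator (fun _ => (1 : ℝ)) (X i ω)

theorem monotone_empiricalFreq (X : ℕ → Ω → α) (n : ℕ) (ω : Ω) :
    Monotone (empiricalFreq X n ω) := fun _ _ hST =>
  mul_le_mul_of_nonneg_left (Finset.sum_le_sum fun _ _ =>
    indicator_le_indicator_of_subset hST (fun _ => zero_le_one) _) (by positivity)

variable [MeasurableSpace Ω] [MeasurableSpace α]

theorem ae_tendsto_empiricalFreq {P : Measure Ω} {μ : Measure α} [IsFiniteMeasure μ]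
    {X : ℕ → Ω → α} (hX : ∀ i, AEMeasurable (X i) P)
    (hindep : Pairwise fun i j => IndepFun (X i) (X j) P) (hident : ∀ i, P.map (X i) = μ)
    {S : Set α} (hS : MeasurableSet S) :
    ∀ᵐ ω ∂P, Tendsto (fun n => empiricalFreq X n ω S) atTop (𝓝 (μ.real S)) := by
  set g : α → ℝ := S.indicator fun _ => 1
  have hg : Measurable g := measurable_const.indicator hS
  have hint : Integrable (g ∘ X 0) P := by
    rw [← integrable_map_measure hg.aestronglyMeasurable (hX 0), hident 0]
    exact (integrable_const 1).indicator hS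
  have hmean : P[g ∘ X 0] = μ.real S := by
    rw [Function.comp_def, ← integral_map (hX 0) hg.aestronglyMeasurable, hident 0]
    exact integral_indicator_one hS
  have hident' : ∀ i, IdentDistrib (g ∘ X i) (g ∘ X 0) P P := fun i =>
    (IdentDistrib.mk (hX i) (hX 0) (by rw [hident, hident])).comp hg
  rw [← hmean]
  exact strong_law_ae (fun i => g ∘ X i) hint (fun i j hij => (hindep hij).comp hg hg) hident'

end Empirical

section UniformConvergence

theorem abs_sub_le_of_subset_of_subset {α : Type*} {e m : Set α → ℝ} (he : Monotone e)
    (hm : Monotone m) {I A O : Set α} (hIA : I ⊆ A) (hAO : A ⊆ O) {δ : ℝ}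
    (hI : |e I - m I| ≤ δ) (hO : |e O - m O| ≤ δ) : |e A - m A| ≤ δ + (m O - m I) := by
  rw [abs_le] at hI hO ⊢
  have := he hIA; have := he hAO; have := hm hIA; have := hm hAO
  constructor <;> linarith

variable {α ι : Type*} [MeasurableSpace α] {μ : Measure α} {A : ι → Set α}

theorem tendstoUniformly_of_tendsto_on_brackets [IsFiniteMeasure μ] {e : ℕ → Set α → ℝ}
    (he : ∀ n, Monotone (e n))
    (hbr : ∀ ε > 0, ∃ 𝒞 : Finset (Set α), (∀ C ∈ 𝒞, Tendsto (e · C) atTop (𝓝 (μ.real C))) ∧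
      ∀ i, ∃ I ∈ 𝒞, ∃ O ∈ 𝒞, I ⊆ A i ∧ A i ⊆ O ∧ μ.real (O \ I) ≤ ε) :
    TendstoUniformly (fun n i => e n (A i)) (fun i => μ.real (A i)) atTop := by
  rw [Metric.tendstoUniformly_iff]
  intro ε hε
  obtain ⟨𝒞, h𝒞conv, h𝒞⟩ := hbr (ε / 3) (by positivity)
  have hclose : ∀ᶠ n in atTop, ∀ C ∈ 𝒞, |e n C - μ.real C| ≤ ε / 3 :=
    (eventually_all_finset 𝒞).2 fun C hC =>
      ((h𝒞conv C hC).eventually (Metric.closedBall_mem_nhds _ (by positivity : 0 < ε / 3))).mono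
        fun n hn => by rwa [← Real.dist_eq]
  filter_upwards [hclose] with n hn i
  obtain ⟨I, hI, O, hO, hIA, hAO, hgap⟩ := h𝒞 i
  rw [dist_comm, Real.dist_eq]
  calc |e n (A i) - μ.real (A i)| ≤ ε / 3 + (μ.real O - μ.real I) :=
        abs_sub_le_of_subset_of_subset (he n) (fun _ _ => measureReal_mono) hIA hAO
          (hn I hI) (hn O hO)
    _ ≤ ε / 3 + ε / 3 := by gcongr; exact (le_measureReal_sdiff (μ := μ)).trans hgap
    _ < ε := by linarith

theorem HasFiniteBrackets.ae_tendstoUniformly_empiricalFreq [IsFiniteMeasure μ]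
    (hA : HasFiniteBrackets μ A) {Ω : Type*} [MeasurableSpace Ω] {P : Measure Ω}
    {X : ℕ → Ω → α} (hX : ∀ i, AEMeasurable (X i) P)
    (hindep : Pairwise fun i j => ProbabilityTheory.IndepFun (X i) (X j) P)
    (hident : ∀ i, P.map (X i) = μ) :
    ∀ᵐ ω ∂P, TendstoUniformly (fun n i => empiricalFreq X n ω (A i))
      (fun i => μ.real (A i)) atTop := by
  choose 𝒞 h𝒞meas h𝒞 using fun k : ℕ =>
    hA (ENNReal.ofReal (1 / (k + 1))) (ENNReal.ofReal_pos.2 Nat.one_div_pos_of_nat)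
  have hconv : ∀ᵐ ω ∂P, ∀ k, ∀ C ∈ 𝒞 k,
      Tendsto (empiricalFreq X · ω C) atTop (𝓝 (μ.real C)) :=
    ae_all_iff.2 fun k => (ae_ball_iff (𝒞 k).countable_toSet).2 fun C hC =>
      ae_tendsto_empiricalFreq hX hindep hident (h𝒞meas k C hC)
  filter_upwards [hconv] with ω hω
  refine tendstoUniformly_of_tendsto_on_brackets (monotone_empiricalFreq X · ω) fun ε hε => ?_
  obtain ⟨k, hk⟩ := exists_nat_one_div_lt hε
  refine ⟨𝒞 k, hω k, fun i => ?_⟩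
  obtain ⟨I, hI, O, hO, hIA, hAO, hgap⟩ := h𝒞 k i
  exact ⟨I, hI, O, hO, hIA, hAO,
    (ENNReal.toReal_le_of_le_ofReal Nat.one_div_pos_of_nat.le hgap).trans hk.le⟩

end UniformConvergence

section RealValued

variable {ι β : Type*} {l : Filter ι}

theorem TendstoUniformly.min {F G : ι → β → ℝ} {f g : β → ℝ} (hF : TendstoUniformly F f l)
    (hG : TendstoUniformly G g l) :
    TendstoUniformly (fun n x => min (F n x) (G n x)) (fun x => min (f x) (g x)) l := by
  rw [Metric.tendstoUniformly_iff] at hF hG ⊢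
  intro ε hε
  filter_upwards [hF ε hε, hG ε hε] with n hFn hGn x
  specialize hFn x
  specialize hGn x
  rw [Real.dist_eq] at hFn hGn ⊢
  exact (abs_min_sub_min_le_max _ _ _ _).trans_lt (max_lt hFn hGn)

theorem TendstoUniformly.tendsto_iSup_abs_sub [Nonempty β] {F : ι → β → ℝ} {f : β → ℝ}
    (h : TendstoUniformly F f l) : Tendsto (fun n => ⨆ x, |F n x - f x|) l (𝓝 0) := by
  rw [Metric.tendstoUniformly_iff] at h
  rw [Metric.tendsto_nhds]
  intro ε hε
  filter_upwards [h (ε / 2) (half_pos hε)] with n hn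
  rw [Real.dist_0_eq_abs, abs_of_nonneg (Real.iSup_nonneg fun _ => abs_nonneg _)]
  refine (ciSup_le fun x => ?_).trans_lt (half_lt_self hε)
  rw [abs_sub_comm, ← Real.dist_eq]
  exact (hn x).le

end RealValued

theorem lowerBox_eq_univ_pi (x τ : Fin p → ℝ) :
    lowerBox x τ = univ.pi fun j => Icc (x j - τ j) (x j) := by
  ext; simp only [lowerBox, mem_ofPred_eq, mem_univ_pi, mem_Icc]

theorem upperBox_eq_univ_pi (x τ : Fin p → ℝ) :
    upperBox x τ = univ.pi fun j => Icc (x j) (x j + τ j) := by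
  ext; simp only [upperBox, mem_ofPred_eq, mem_univ_pi, mem_Icc]

theorem ldHRemp_uniform_consistent_general {Ω : Type*} [MeasurableSpace Ω] (ℙ : Measure Ω)
    (μ : Measure (Fin p → ℝ)) [IsProbabilityMeasure μ]
    (X : ℕ → Ω → (Fin p → ℝ))
    (hmeas : ∀ i, Measurable (X i))
    (hindep : ProbabilityTheory.iIndepFun X ℙ)
    (hident : ∀ i, Measure.map (X i) ℙ = μ)
    (τ : Fin p → ℝ) :
    ∀ᵐ ω ∂ℙ, Tendsto
      (fun n => ⨆ x : Fin p → ℝ, |ldHRemp X n ω x τ - ldHRreal μ x τ|)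
      atTop (𝓝 0) := by
  filter_upwards [(hasFiniteBrackets_pi_Icc μ).ae_tendstoUniformly_empiricalFreq
    (fun i => (hmeas i).aemeasurable) (fun _ _ hij => hindep.indepFun hij) hident] with ω hω
  have hlower : TendstoUniformly (fun n x => empiricalFreq X n ω (lowerBox x τ))
      (fun x => μ.real (lowerBox x τ)) atTop := by
    simpa only [lowerBox_eq_univ_pi, Function.comp_def] using
      hω.comp fun (x : Fin p → ℝ) j => (x j - τ j, x j)
  have hupper : TendstoUniformly (fun n x => empiricalFreq X n ω (upperBox x τ))
      (fun x => μ.real (upperBox x τ)) atTop := by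
    simpa only [upperBox_eq_univ_pi, Function.comp_def] using
      hω.comp fun (x : Fin p → ℝ) j => (x j, x j + τ j)
  exact (hlower.min hupper).tendsto_iSup_abs_sub

/-- Uniform strong consistency of the empirical local half-region depth. -/
theorem ldHRemp_uniform_consistent {Ω : Type*} [MeasurableSpace Ω] (ℙ : Measure Ω)
    [IsProbabilityMeasure ℙ] (μ : Measure (Fin p → ℝ)) [IsProbabilityMeasure μ]
    (X : ℕ → Ω → (Fin p → ℝ))
    (hmeas : ∀ i, Measurable (X i))
    (hindep : ProbabilityTheory.iIndepFun X ℙ)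
    (hident : ∀ i, Measure.map (X i) ℙ = μ)
    (τ : Fin p → ℝ) (hτ : ∀ j, 0 ≤ τ j) :
    ∀ᵐ ω ∂ℙ, Tendsto
      (fun n => ⨆ x : Fin p → ℝ, |ldHRemp X n ω x τ - ldHRreal μ x τ|)
      atTop (𝓝 0) :=
  ldHRemp_uniform_consistent_general ℙ μ X hmeas hindep hident τ
end

section
/- If ld_HR(·; X, τ) is uniquely maximized at x̂ and x̂_n is any sequence of maximizers of the empirical local half-region depth ld_HR(·; X_n, τ), then x̂_n → x̂ almost surely. -/
open MeasureTheory Filter Topology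
open scoped ENNReal

variable {p : ℕ}

/-- A USC function strictly below `m` on a compact set is uniformly below some `c < m`. -/
lemma usc_compact_bound {α : Type*} [TopologicalSpace α] {f : α → ℝ}
    (hf : UpperSemicontinuous f) {K : Set α} (hK : IsCompact K) {m : ℝ} (hm : 0 < m)
    (h : ∀ x ∈ K, f x < m) : ∃ c, c < m ∧ ∀ x ∈ K, f x ≤ c := by
  obtain ⟨t, htK, hcov⟩ := hK.elim_nhds_subcover
      (fun x => f ⁻¹' Set.Iio ((f x + m) / 2)) (fun x hx => hf x _ (by linarith [h x hx]))
  rcases t.eq_empty_or_nonempty with rfl | ht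
  · refine ⟨m / 2, by linarith, fun x hx => absurd (hcov hx) (by simp)⟩
  · refine ⟨t.sup' ht (fun x => (f x + m) / 2), ?_, ?_⟩
    · rw [Finset.sup'_lt_iff]
      intro x hx
      linarith [h x (htK x hx)]
    · intro x hx
      obtain ⟨y, hy⟩ := Set.mem_iUnion.1 (hcov hx)
      obtain ⟨hyt, hxy⟩ := Set.mem_iUnion.1 hy
      exact le_trans (le_of_lt hxy) (Finset.le_sup' (fun x => (f x + m) / 2) hyt)

lemma ldHRreal_nonneg (μ : Measure (Fin p → ℝ)) (x τ : Fin p → ℝ) :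
    0 ≤ ldHRreal μ x τ :=
  le_min ENNReal.toReal_nonneg ENNReal.toReal_nonneg

lemma ldHRreal_le_one (μ : Measure (Fin p → ℝ)) [IsProbabilityMeasure μ]
    (x τ : Fin p → ℝ) : ldHRreal μ x τ ≤ 1 := by
  refine min_le_of_left_le ?_
  have h1 : μ (lowerBox x τ) ≤ 1 := prob_le_one
  calc (μ (lowerBox x τ)).toReal ≤ (1 : ℝ≥0∞).toReal :=
        ENNReal.toReal_mono ENNReal.one_ne_top h1
    _ = 1 := by simp

lemma ldHRemp_nonneg {Ω : Type*} (X : ℕ → Ω → (Fin p → ℝ)) (n : ℕ) (ω : Ω)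
    (x τ : Fin p → ℝ) : 0 ≤ ldHRemp X n ω x τ := by
  refine le_min ?_ ?_ <;>
  · refine mul_nonneg (by positivity) (Finset.sum_nonneg fun i _ => ?_)
    exact Set.indicator_nonneg (fun _ _ => zero_le_one) _

lemma ldHRemp_le_one {Ω : Type*} (X : ℕ → Ω → (Fin p → ℝ)) (n : ℕ) (ω : Ω)
    (x τ : Fin p → ℝ) : ldHRemp X n ω x τ ≤ 1 := by
  refine min_le_of_left_le ?_
  rcases Nat.eq_zero_or_pos n with rfl | hn
  · simp
  have hsum : ∑ i ∈ Finset.range n,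
      Set.indicator (lowerBox x τ) (fun _ => (1 : ℝ)) (X i ω) ≤ n := by
    calc ∑ i ∈ Finset.range n, Set.indicator (lowerBox x τ) (fun _ => (1 : ℝ)) (X i ω)
        ≤ ∑ i ∈ Finset.range n, (1 : ℝ) := by
          refine Finset.sum_le_sum fun i _ => ?_
          classical
          rw [Set.indicator_apply]
          split_ifs <;> norm_num
      _ = n := by simp
  have hn' : (0 : ℝ) < n := by exact_mod_cast hn
  rw [inv_mul_le_iff₀ hn', mul_one]
  exact hsum

/-- Strong consistency of the empirical maximizer of the local half-region
depth when the population depth has a unique maximizer. -/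
theorem ldHR_maximizer_consistent {Ω : Type*} [MeasurableSpace Ω] (ℙ : Measure Ω)
    [IsProbabilityMeasure ℙ] (μ : Measure (Fin p → ℝ)) [IsProbabilityMeasure μ]
    (X : ℕ → Ω → (Fin p → ℝ)) (τ : Fin p → ℝ) (hτ : ∀ j, 0 ≤ τ j)
    (xhat : Fin p → ℝ)
    (husc : UpperSemicontinuous (fun x : Fin p → ℝ => ldHRreal μ x τ))
    (hvanish : Tendsto (fun M : ℝ => ⨆ x ∈ {x : Fin p → ℝ | M ≤ ‖x‖}, ldHRreal μ x τ)
      atTop (𝓝 0))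
    (hmax : ∀ x : Fin p → ℝ, x ≠ xhat → ldHRreal μ x τ < ldHRreal μ xhat τ)
    (huniform : ∀ᵐ ω ∂ℙ, Tendsto
      (fun n => ⨆ x : Fin p → ℝ, |ldHRemp X n ω x τ - ldHRreal μ x τ|)
      atTop (𝓝 0))
    (xhatn : ℕ → Ω → (Fin p → ℝ))
    (hargmax : ∀ n ω, ldHRemp X n ω (xhatn n ω) τ
      = ⨆ x : Fin p → ℝ, ldHRemp X n ω x τ) :
    ∀ᵐ ω ∂ℙ, Tendsto (fun n => xhatn n ω) atTop (𝓝 xhat) := by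
  rcases Nat.eq_zero_or_pos p with hp | hp
  · have hsub : Subsingleton (Fin p → ℝ) := by subst hp; infer_instance
    filter_upwards with ω
    have heq : (fun n => xhatn n ω) = fun _ => xhat :=
      funext fun n => Subsingleton.elim _ _
    rw [heq]; exact tendsto_const_nhds
  · set m := ldHRreal μ xhat τ with hm
    have hm0 : 0 < m := by
      have hne : (fun j : Fin p => xhat j + 1) ≠ xhat := by
        intro h
        have := congrFun h ⟨0, hp⟩
        simp at this
      exact lt_of_le_of_lt (ldHRreal_nonneg μ _ τ) (hmax _ hne)
    have key : ∀ ε > (0:ℝ), ∃ c, c < m ∧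
        ∀ x : Fin p → ℝ, ε ≤ dist x xhat → ldHRreal μ x τ ≤ c := by
      intro ε hε
      obtain ⟨M, hM⟩ :=
        (hvanish.eventually_lt_const (show (0:ℝ) < m/2 by linarith)).exists
      have hfarM : ∀ x : Fin p → ℝ, M ≤ ‖x‖ → ldHRreal μ x τ ≤ m/2 := by
        intro x hx
        have hbdd : BddAbove (Set.range fun x : Fin p → ℝ =>
            ⨆ (_ : x ∈ {x : Fin p → ℝ | M ≤ ‖x‖}), ldHRreal μ x τ) := by
          refine ⟨1, Set.forall_mem_range.2 fun x => ?_⟩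
          exact Real.iSup_le (fun _ => ldHRreal_le_one μ x τ) zero_le_one
        have h1 : ldHRreal μ x τ
            = ⨆ (_ : x ∈ {x : Fin p → ℝ | M ≤ ‖x‖}), ldHRreal μ x τ :=
          (ciSup_pos (p := x ∈ {x : Fin p → ℝ | M ≤ ‖x‖}) (f := fun _ => ldHRreal μ x τ) hx).symm
        calc ldHRreal μ x τ
            ≤ ⨆ x ∈ {x : Fin p → ℝ | M ≤ ‖x‖}, ldHRreal μ x τ :=
              h1.le.trans (le_ciSup hbdd x)
          _ ≤ m/2 := hM.le
      set K : Set (Fin p → ℝ) :=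
        Metric.closedBall (0 : Fin p → ℝ) |M| ∩ {x | ε ≤ dist x xhat} with hK
      have hKc : IsCompact K := by
        refine (isCompact_closedBall _ _).inter_right ?_
        exact isClosed_le continuous_const ((continuous_id.dist continuous_const))
      have hlt : ∀ x ∈ K, ldHRreal μ x τ < m := by
        intro x hx
        refine hmax x fun h => ?_
        rw [h] at hx
        have := hx.2
        simp only [Set.mem_setOf_eq, dist_self] at this
        linarith
      obtain ⟨c1, hc1, hc1'⟩ := usc_compact_bound husc hKc hm0 hlt
      refine ⟨max c1 (m/2), max_lt hc1 (by linarith), fun x hx => ?_⟩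
      rcases le_total ‖x‖ |M| with h' | h'
      · refine le_max_of_le_left (hc1' x ⟨?_, hx⟩)
        simpa [Metric.mem_closedBall, dist_zero_right] using h'
      · exact le_max_of_le_right (hfarM x ((le_abs_self M).trans h'))
    filter_upwards [huniform] with ω hω
    rw [Metric.tendsto_atTop]
    intro ε hε
    obtain ⟨c, hcm, hc⟩ := key ε hε
    set δ := (m - c) / 3 with hδ
    have hδ0 : 0 < δ := by rw [hδ]; linarith
    have hev := hω.eventually_lt_const hδ0
    rw [eventually_atTop] at hev
    obtain ⟨N, hN⟩ := hev
    refine ⟨N, fun n hn => ?_⟩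
    have hsup := hN n hn
    have habs_bdd : BddAbove (Set.range fun x : Fin p → ℝ =>
        |ldHRemp X n ω x τ - ldHRreal μ x τ|) := by
      refine ⟨1, Set.forall_mem_range.2 fun x => ?_⟩
      rw [abs_sub_le_iff]
      constructor
      · linarith [ldHRemp_le_one X n ω x τ, ldHRreal_nonneg μ x τ]
      · linarith [ldHRemp_nonneg X n ω x τ, ldHRreal_le_one μ x τ]
    have hbd : ∀ x : Fin p → ℝ,
        |ldHRemp X n ω x τ - ldHRreal μ x τ| < δ := fun x =>
      lt_of_le_of_lt (le_ciSup habs_bdd x) hsup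
    have hemp_bdd : BddAbove (Set.range fun x : Fin p → ℝ => ldHRemp X n ω x τ) :=
      ⟨1, Set.forall_mem_range.2 fun x => ldHRemp_le_one X n ω x τ⟩
    have h1 : ldHRemp X n ω xhat τ ≤ ldHRemp X n ω (xhatn n ω) τ := by
      rw [hargmax]; exact le_ciSup hemp_bdd xhat
    have h2 := hbd (xhatn n ω)
    have h3 := hbd xhat
    rw [abs_sub_lt_iff] at h2 h3
    have hfar : c < ldHRreal μ (xhatn n ω) τ := by
      rw [hδ] at h2 h3
      linarith [h2.1, h3.2]
    by_contra hcon
    push_neg at hcon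
    exact absurd (hc _ hcon) (not_le.2 hfar)
end

section
/- The local half-region depth is invariant under positive-definite diagonal affine transformations provided the threshold transforms accordingly: for a diagonal matrix A with all diagonal entries strictly positive and b ∈ R^p, ld_HR(Ax + b; AX + b, Aτ) = ld_HR(x; X, τ). -/
open MeasureTheory Filter Topology
open scoped ENNReal

variable {p : ℕ}

lemma lowerBox_measurable (x τ : Fin p → ℝ) : MeasurableSet (lowerBox x τ) := by
  have : lowerBox x τ = ⋂ j, {z : Fin p → ℝ | x j - τ j ≤ z j ∧ z j ≤ x j} := by
    ext z; simp [lowerBox]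
  rw [this]
  exact MeasurableSet.iInter fun j =>
    (MeasurableSet.inter
      (measurableSet_le measurable_const (measurable_pi_apply j))
      (measurableSet_le (measurable_pi_apply j) measurable_const))

lemma upperBox_measurable (x τ : Fin p → ℝ) : MeasurableSet (upperBox x τ) := by
  have : upperBox x τ = ⋂ j, {z : Fin p → ℝ | x j ≤ z j ∧ z j ≤ x j + τ j} := by
    ext z; simp [upperBox]
  rw [this]
  exact MeasurableSet.iInter fun j =>
    (MeasurableSet.inter
      (measurableSet_le measurable_const (measurable_pi_apply j))
      (measurableSet_le (measurable_pi_apply j) measurable_const))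

/-- Invariance of the local half-region depth under positive diagonal affine
transformations, with the threshold transformed accordingly. -/
theorem ldHR_affine_invariant (μ : Measure (Fin p → ℝ)) [IsProbabilityMeasure μ]
    (x τ a b : Fin p → ℝ) (hτ : ∀ j, 0 ≤ τ j) (ha : ∀ j, 0 < a j) :
    ldHR (Measure.map (fun z j => a j * z j + b j) μ)
        (fun j => a j * x j + b j) (fun j => a j * τ j)
      = ldHR μ x τ := by
  have hT : Measurable (fun z : Fin p → ℝ => fun j => a j * z j + b j) :=
    measurable_pi_lambda _ fun j => ((measurable_pi_apply j).const_mul _).add_const _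
  have hlow : (fun z : Fin p → ℝ => fun j => a j * z j + b j) ⁻¹'
      lowerBox (fun j => a j * x j + b j) (fun j => a j * τ j) = lowerBox x τ := by
    ext z
    simp only [lowerBox, Set.mem_preimage, Set.mem_setOf_eq]
    refine forall_congr' fun j => ?_
    constructor
    · rintro ⟨h1, h2⟩
      constructor
      · nlinarith [ha j]
      · nlinarith [ha j]
    · rintro ⟨h1, h2⟩
      constructor
      · nlinarith [ha j]
      · nlinarith [ha j]
  have hup : (fun z : Fin p → ℝ => fun j => a j * z j + b j) ⁻¹'
      upperBox (fun j => a j * x j + b j) (fun j => a j * τ j) = upperBox x τ := by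
    ext z
    simp only [upperBox, Set.mem_preimage, Set.mem_setOf_eq]
    refine forall_congr' fun j => ?_
    constructor
    · rintro ⟨h1, h2⟩
      constructor
      · nlinarith [ha j]
      · nlinarith [ha j]
    · rintro ⟨h1, h2⟩
      constructor
      · nlinarith [ha j]
      · nlinarith [ha j]
  rw [ldHR, Measure.map_apply hT (lowerBox_measurable _ _),
    Measure.map_apply hT (upperBox_measurable _ _), hlow, hup, ldHR]
end

section
/- Let Y be a stochastic process with continuous trajectories on a compact interval I, and let a, b ∈ C(I) with a(t) > 0 for all t ∈ I. Then the functional local half-region depth satisfies ld_HR(a·y + b; a·Y + b, a·τ) = ld_HR(y; Y, τ) for every y ∈ C(I) and every nonnegative τ ∈ C(I). -/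
open MeasureTheory Filter Topology
open scoped ENNReal

variable {I : Type*} [TopologicalSpace I] [CompactSpace I]
variable {Ω : Type*} [MeasurableSpace Ω]

/-- Functional local half-region depth of a curve `y` with respect to a
stochastic process `Y` with continuous trajectories, with threshold `τ`. -/
noncomputable def ldHRf (ℙ : Measure Ω) (Y : Ω → C(I, ℝ)) (y τ : C(I, ℝ)) : ℝ≥0∞ :=
  min (ℙ {ω | ∀ t, y t - τ t ≤ Y ω t ∧ Y ω t ≤ y t})
      (ℙ {ω | ∀ t, y t ≤ Y ω t ∧ Y ω t ≤ y t + τ t})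

/-- Functional half-region depth. -/
noncomputable def dHRf (ℙ : Measure Ω) (Y : Ω → C(I, ℝ)) (y : C(I, ℝ)) : ℝ≥0∞ :=
  min (ℙ {ω | ∀ t, Y ω t ≤ y t}) (ℙ {ω | ∀ t, y t ≤ Y ω t})

/-- Affine invariance of the functional local half-region depth. -/
theorem ldHRf_affine_invariant (ℙ : Measure Ω) [IsProbabilityMeasure ℙ]
    (Y : Ω → C(I, ℝ)) (y τ a b : C(I, ℝ))
    (hτ : ∀ t, 0 ≤ τ t) (ha : ∀ t, 0 < a t) :
    ldHRf ℙ (fun ω => a * Y ω + b) (a * y + b) (a * τ) = ldHRf ℙ Y y τ := by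
  unfold ldHRf
  congr 1 <;> congr 1 <;> ext ω <;> simp only [Set.mem_setOf_eq, ContinuousMap.add_apply,
    ContinuousMap.mul_apply] <;> refine forall_congr' fun t => ?_ <;>
    constructor <;> rintro ⟨h1, h2⟩ <;> constructor <;> nlinarith [ha t, hτ t]
end

section
/- If the stochastic process Y is tight in sup-norm, i.e. P(‖Y‖_∞ ≥ M) → 0 as M → ∞, then the functional local half-region depth vanishes at infinity: for any strictly positive τ, sup_{‖y‖_∞ ≥ M} ld_HR(y; Y, τ) → 0 as M → ∞. -/
open MeasureTheory Filter Topology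
open scoped ENNReal

variable {I : Type*} [TopologicalSpace I] [CompactSpace I]
variable {Ω : Type*} [MeasurableSpace Ω]

/-!
Each half of the local depth is bounded by the corresponding half of the half-region depth,
so it suffices that `dHRf` vanishes at infinity. If `‖y‖ ≥ M > 0`, compactness gives a `t`
with `|y t| ≥ M`. When `y t ≥ M`, every trajectory lying above `y` has `‖Y‖ ≥ Y t ≥ M`;
when `y t ≤ -M`, every trajectory lying below `y` has `‖Y‖ ≥ -Y t ≥ M`. Hence
`dHRf y ≤ ℙ (‖Y‖ ≥ M)`, which tends to `0` by tightness.
-/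

theorem ContinuousMap.exists_le_norm_apply {E : Type*} [NormedAddCommGroup E]
    {f : C(I, E)} {M : ℝ} (hM : 0 < M) (hf : M ≤ ‖f‖) : ∃ t, M ≤ ‖f t‖ := by
  by_contra! h
  exact ((ContinuousMap.norm_lt_iff f hM).2 h).not_ge hf

omit [CompactSpace I] in
theorem ldHRf_le_dHRf (ℙ : Measure Ω) (Y : Ω → C(I, ℝ)) (y τ : C(I, ℝ)) :
    ldHRf ℙ Y y τ ≤ dHRf ℙ Y y :=
  min_le_min (measure_mono fun _ hω t => (hω t).2) (measure_mono fun _ hω t => (hω t).1)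

theorem dHRf_le_measure_le_norm (ℙ : Measure Ω) (Y : Ω → C(I, ℝ)) {y : C(I, ℝ)}
    {M : ℝ} (hM : 0 < M) (hy : M ≤ ‖y‖) : dHRf ℙ Y y ≤ ℙ {ω | M ≤ ‖Y ω‖} := by
  obtain ⟨t, ht⟩ := ContinuousMap.exists_le_norm_apply hM hy
  have hYt : ∀ ω, |Y ω t| ≤ ‖Y ω‖ := fun ω => (Y ω).norm_coe_le_norm t
  rcases le_abs'.1 (Real.norm_eq_abs (y t) ▸ ht) with hbelow | habove
  · refine (min_le_left _ _).trans <| measure_mono fun ω hω => ?_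
    change M ≤ ‖Y ω‖
    linarith [hω t, neg_abs_le (Y ω t), hYt ω]
  · refine (min_le_right _ _).trans <| measure_mono fun ω hω => ?_
    change M ≤ ‖Y ω‖
    linarith [hω t, le_abs_self (Y ω t), hYt ω]

theorem tendsto_iSup_dHRf_atTop (ℙ : Measure Ω) (Y : Ω → C(I, ℝ))
    (htight : Tendsto (fun M : ℝ => ℙ {ω | M ≤ ‖Y ω‖}) atTop (𝓝 0)) :
    Tendsto (fun M : ℝ => ⨆ y ∈ {y : C(I, ℝ) | M ≤ ‖y‖}, dHRf ℙ Y y) atTop (𝓝 0) := by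
  have hbound : ∀ᶠ M : ℝ in atTop,
      (⨆ y ∈ {y : C(I, ℝ) | M ≤ ‖y‖}, dHRf ℙ Y y) ≤ ℙ {ω | M ≤ ‖Y ω‖} :=
    (eventually_gt_atTop 0).mono fun _ hM =>
      iSup₂_le fun _ hy => dHRf_le_measure_le_norm ℙ Y hM hy
  exact tendsto_of_tendsto_of_tendsto_of_le_of_le' tendsto_const_nhds htight
    (.of_forall fun _ => zero_le) hbound

theorem ldHRf_vanishing_general (ℙ : Measure Ω)
    (Y : Ω → C(I, ℝ)) (τ : C(I, ℝ))
    (htight : Tendsto (fun M : ℝ => ℙ {ω | M ≤ ‖Y ω‖}) atTop (𝓝 0)) :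
    Tendsto (fun M : ℝ => ⨆ y ∈ {y : C(I, ℝ) | M ≤ ‖y‖}, ldHRf ℙ Y y τ)
      atTop (𝓝 0) :=
  tendsto_of_tendsto_of_tendsto_of_le_of_le tendsto_const_nhds
    (tendsto_iSup_dHRf_atTop ℙ Y htight) (fun _ => zero_le)
    fun _ => iSup₂_mono fun y _ => ldHRf_le_dHRf ℙ Y y τ

/-- If the process is tight in sup-norm, the functional local half-region depth
vanishes at infinity (uniformly over curves of large sup-norm). -/
theorem ldHRf_vanishing (ℙ : Measure Ω) [IsProbabilityMeasure ℙ]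
    (Y : Ω → C(I, ℝ)) (τ : C(I, ℝ))
    (hτ : ∃ c : ℝ, 0 < c ∧ ∀ t, c ≤ τ t)
    (htight : Tendsto (fun M : ℝ => ℙ {ω | M ≤ ‖Y ω‖}) atTop (𝓝 0)) :
    Tendsto (fun M : ℝ => ⨆ y ∈ {y : C(I, ℝ) | M ≤ ‖y‖}, ldHRf ℙ Y y τ)
      atTop (𝓝 0) :=
  ldHRf_vanishing_general ℙ Y τ htight
end
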